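/- Let F be a class of functions from Z to {0,1} with Littlestone dimension d ≥ 1, and T ≥ 1. Then the sequential Rademacher complexity of F satisfies R_T(F) ≤ 12·√(d·log(eT))/√T, and hence T·R_T(F) ≤ 12·√(d·T·(log T + 1)). -/

import Mathlib

abbrev BTree (Z : Type*) (d : ℕ) := ∀ t : Fin d, (Fin t → Bool) → Z

def LShattered {Z : Type*} (F : Set (Z → Bool)) (d : ℕ) (tr : BTree Z d) : Prop :=
  ∀ ε : Fin d → Bool, ∃ f ∈ F, ∀ t : Fin d,
    f (tr t fun i => ε ⟨i.1, i.isLt.trans t.isLt⟩) = ε t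

noncomputable def Ldim {Z : Type*} (F : Set (Z → Bool)) : ℕ∞ :=
  sSup ((fun n : ℕ => (n : ℕ∞)) '' {n | ∃ tr : BTree Z n, LShattered F n tr})

/-- Sequential Rademacher complexity of a boolean class `F` at horizon `T`:
the supremum over `Z`-valued trees of the expectation (uniform average over the
`2^T` i.i.d. Rademacher sign sequences) of `sup_{f ∈ F} (1/T) Σ_t ε_t f(z^{(t)}(ε))`. -/
noncomputable def seqRad {Z : Type*} (F : Set (Z → Bool)) (T : ℕ) : ℝ :=
  ⨆ tree : BTree Z T,
    (∑ ε : Fin T → Bool,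
      ⨆ f : F, (1 / (T : ℝ)) * ∑ t : Fin T,
        (if ε t then (1 : ℝ) else -1) *
          (if (f : Z → Bool) (tree t fun i => ε ⟨i.1, i.isLt.trans t.isLt⟩) then 1 else 0))
      / 2 ^ T

/-!
Splitting `F` by its value at the root of a tree, one of the two halves has no shattered tree of
depth `d`. By induction on the depth, every `Z`-valued tree of depth `T` therefore carries a
0-cover by `∑_{i ≤ d} (T choose i) ≤ (T + 1) ^ d` Boolean trees; the covers of the two subtrees can
be glued index by index, because a path enters only one of them. Massart's finite-class argument
(Jensen for `exp`, then `cosh x ≤ exp (x ^ 2 / 2)` node by node along the tree) bounds the expected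
supremum over a cover of size `N` by `log N / λ + λ T / 2`, and the choice
`λ = √(2 d log (eT) / T)` gives `R_T(F) ≤ √2 · √(d log (eT)) / √T`.
-/

namespace BTree

variable {Z W : Type*} {T : ℕ}

/-- `z t (hist ε t)` is the paper's `z_t(ε_{1:t-1})`. -/
def hist (ε : Fin T → Bool) (t : Fin T) : Fin t → Bool :=
  fun i => ε ⟨i.1, i.isLt.trans t.isLt⟩

def root (z : BTree Z (T + 1)) : Z :=
  z 0 fun i => (Nat.not_lt_zero _ i.isLt).elim

def child (z : BTree Z (T + 1)) (b : Bool) : BTree Z T :=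
  fun t κ => z t.succ (Fin.cons b κ)

def node (x : Z) (v : Bool → BTree Z T) : BTree Z (T + 1) :=
  Fin.cases (motive := fun t : Fin (T + 1) => (Fin t → Bool) → Z) (fun _ => x)
    (fun (t : Fin T) (κ : Fin (t + 1) → Bool) => v (κ 0) t (Fin.tail κ))

def map (φ : Z → W) (z : BTree Z T) : BTree W T := fun t κ => φ (z t κ)

lemma apply_zero (z : BTree Z (T + 1)) (κ : Fin (0 : Fin (T + 1)) → Bool) : z 0 κ = root z :=
  congrArg (z 0) (funext fun i => (Nat.not_lt_zero _ i.isLt).elim)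

lemma hist_succ (ε : Fin (T + 1) → Bool) (t : Fin T) :
    hist ε t.succ = Fin.cons (ε 0) (hist (Fin.tail ε) t) := by
  funext i
  induction i using Fin.cases <;> rfl

lemma apply_succ_hist (z : BTree Z (T + 1)) (ε : Fin (T + 1) → Bool) (t : Fin T) :
    z t.succ (hist ε t.succ) = child z (ε 0) t (hist (Fin.tail ε) t) := by
  rw [hist_succ]; rfl

@[simp] lemma child_node (x : Z) (v : Bool → BTree Z T) (b : Bool) : child (node x v) b = v b := by
  funext t κ
  rfl

end BTree

open BTree

section Shattering

variable {Z : Type*} {F G : Set (Z → Bool)} {n T : ℕ}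

lemma LShattered.nonempty {tr : BTree Z n} (h : LShattered F n tr) : F.Nonempty :=
  let ⟨f, hf, _⟩ := h fun _ => true
  ⟨f, hf⟩

lemma LShattered.mono {tr : BTree Z n} (h : LShattered F n tr) (hFG : F ⊆ G) :
    LShattered G n tr :=
  fun ε => (h ε).imp fun _ hf => ⟨hFG hf.1, hf.2⟩

lemma LShattered.node {x : Z} {v : Bool → BTree Z n}
    (hv : ∀ b, LShattered {f ∈ F | f x = b} n (v b)) : LShattered F (n + 1) (node x v) := by
  intro ε
  obtain ⟨f, ⟨hfF, hfx⟩, hf⟩ := hv (ε 0) (Fin.tail ε)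
  refine ⟨f, hfF, Fin.cases hfx fun t => ?_⟩
  show f (BTree.node x v t.succ (hist ε t.succ)) = ε t.succ
  rw [apply_succ_hist (BTree.node x v), child_node]
  exact hf t

lemma exists_not_lShattered_restrict (hF : ∀ tr, ¬ LShattered F (n + 1) tr) (x : Z) :
    ∃ b, ∀ tr, ¬ LShattered {f ∈ F | f x = b} n tr := by
  by_contra! h
  choose v hv using h
  exact hF _ (LShattered.node hv)

lemma eq_empty_of_not_lShattered_zero (hF : ∀ tr : BTree Z 0, ¬ LShattered F 0 tr) : F = ∅ :=
  Set.eq_empty_of_forall_notMem fun f hf =>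
    hF (fun t => t.elim0) fun _ => ⟨f, hf, fun t => t.elim0⟩

lemma nonempty_of_Ldim_ne_zero (h : Ldim F ≠ 0) : F.Nonempty := by
  by_contra hF
  refine h (sSup_eq_bot.2 ?_)
  rintro _ ⟨n, ⟨tr, htr⟩, rfl⟩
  exact (hF htr.nonempty).elim

lemma not_lShattered_of_Ldim_lt (h : Ldim F < n) (tr : BTree Z n) : ¬ LShattered F n tr :=
  fun htr => (le_sSup ⟨n, ⟨tr, htr⟩, rfl⟩ : (n : ℕ∞) ≤ Ldim F).not_gt h

end Shattering

section ZeroCover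

variable {Z ι : Type*} {F G : Set (Z → Bool)} {T : ℕ}

def IsZeroCover (F : Set (Z → Bool)) (z : BTree Z T) (V : ι → BTree Bool T) : Prop :=
  ∀ f ∈ F, ∀ ε, ∃ i, ∀ t, V i t (hist ε t) = f (z t (hist ε t))

namespace IsZeroCover

lemma mono {z : BTree Z T} {V : ι → BTree Bool T} (hV : IsZeroCover G z V) (hFG : F ⊆ G) :
    IsZeroCover F z V :=
  fun f hf => hV f (hFG hf)

lemma append {z : BTree Z T} {m k : ℕ} {V : Fin m → BTree Bool T} {W : Fin k → BTree Bool T}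
    (hV : IsZeroCover F z V) (hW : IsZeroCover G z W) : IsZeroCover (F ∪ G) z (Fin.append V W) := by
  rintro f (hf | hf) ε
  · obtain ⟨i, hi⟩ := hV f hf ε
    exact ⟨Fin.castAdd k i, by simpa using hi⟩
  · obtain ⟨i, hi⟩ := hW f hf ε
    exact ⟨Fin.natAdd m i, by simpa using hi⟩

lemma node {z : BTree Z (T + 1)} {V : Bool → ι → BTree Bool T} {c : Bool}
    (hc : ∀ f ∈ F, f (root z) = c) (hV : ∀ b, IsZeroCover F (child z b) (V b)) :
    IsZeroCover F z fun i => BTree.node c fun b => V b i := by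
  intro f hf ε
  obtain ⟨i, hi⟩ := hV (ε 0) f hf (Fin.tail ε)
  refine ⟨i, Fin.cases ?_ fun t => ?_⟩
  · rw [apply_zero z, hc f hf]
    rfl
  · show BTree.node c (fun b => V b i) t.succ (hist ε t.succ) = f (z t.succ (hist ε t.succ))
    rw [apply_succ_hist (BTree.node _ _), apply_succ_hist z, child_node]
    exact hi t

end IsZeroCover

/-- `coverBound n T = ∑ i < n, T.choose i`: the recursion is Pascal's rule. -/
def coverBound : ℕ → ℕ → ℕ
  | 0, _ => 0
  | _ + 1, 0 => 1
  | n + 1, T + 1 => coverBound (n + 1) T + coverBound n T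

lemma coverBound_succ_le (d T : ℕ) : coverBound (d + 1) T ≤ (T + 1) ^ d := by
  induction T generalizing d with
  | zero => simp [coverBound]
  | succ T ih =>
    rcases d with _ | d
    · simpa [coverBound] using ih 0
    · calc coverBound (d + 2) (T + 1) = coverBound (d + 2) T + coverBound (d + 1) T := rfl
        _ ≤ (T + 1) ^ (d + 1) + (T + 1) ^ d := Nat.add_le_add (ih _) (ih _)
        _ = (T + 2) * (T + 1) ^ d := by ring
        _ ≤ (T + 1 + 1) ^ (d + 1) := by
          rw [pow_succ']
          exact Nat.mul_le_mul_left _ (Nat.pow_le_pow_left (by omega) d)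

theorem exists_isZeroCover {n : ℕ} {F : Set (Z → Bool)} (hF : ∀ tr, ¬ LShattered F n tr)
    (z : BTree Z T) : ∃ V : Fin (coverBound n T) → BTree Bool T, IsZeroCover F z V := by
  induction T generalizing n F with
  | zero =>
    rcases n with _ | n
    · exact ⟨Fin.elim0, by simp [eq_empty_of_not_lShattered_zero hF, IsZeroCover]⟩
    · exact ⟨fun _ t => t.elim0, fun _ _ _ => ⟨⟨0, Nat.one_pos⟩, fun t => t.elim0⟩⟩
  | succ T ih =>
    rcases n with _ | n
    · exact ⟨Fin.elim0, by simp [eq_empty_of_not_lShattered_zero hF, IsZeroCover]⟩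
    obtain ⟨b, hb⟩ := exists_not_lShattered_restrict hF (root z)
    have hbig : ∀ tr, ¬ LShattered {f ∈ F | f (root z) = !b} (n + 1) tr :=
      fun tr htr => hF tr (htr.mono fun _ hf => hf.1)
    choose V hV using fun c => ih hbig (child z c)
    choose W hW using fun c => ih hb (child z c)
    refine ⟨Fin.append (fun i => node (!b) fun c => V c i) (fun i => node b fun c => W c i), ?_⟩
    refine ((IsZeroCover.node (fun _ hf => hf.2) hV).append
      (IsZeroCover.node (fun _ hf => hf.2) hW)).mono fun f hf => ?_
    by_cases hfb : f (root z) = b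
    · exact Or.inr ⟨hf, hfb⟩
    · exact Or.inl ⟨hf, Bool.eq_not_iff.2 hfb⟩

lemma one_le_coverBound_succ (n T : ℕ) : 1 ≤ coverBound (n + 1) T := by
  induction T with
  | zero => rfl
  | succ T ih => exact ih.trans (Nat.le_add_right _ _)

lemma log_coverBound_le (d : ℕ) {T : ℕ} (hT : 1 ≤ T) :
    Real.log (coverBound (d + 1) T) ≤ d * Real.log (Real.exp 1 * T) := by
  have hT' : (1 : ℝ) ≤ T := by exact_mod_cast hT
  have he : (T : ℝ) + 1 ≤ Real.exp 1 * T := by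
    nlinarith [Real.add_one_le_exp 1]
  rw [← Real.log_pow]
  refine Real.log_le_log (by exact_mod_cast one_le_coverBound_succ d T) ?_
  calc (coverBound (d + 1) T : ℝ) ≤ ((T + 1 : ℕ) : ℝ) ^ d := by
        exact_mod_cast coverBound_succ_le d T
    _ ≤ (Real.exp 1 * T) ^ d := by push_cast; gcongr

end ZeroCover

section SignedSum

open Real

variable {T : ℕ}

noncomputable def signedSum (x : BTree ℝ T) (ε : Fin T → Bool) : ℝ :=
  ∑ t, (if ε t then 1 else -1) * x t (hist ε t)

lemma signedSum_cons (x : BTree ℝ (T + 1)) (b : Bool) (ε : Fin T → Bool) :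
    signedSum x (Fin.cons b ε) = (if b then 1 else -1) * root x + signedSum (child x b) ε := by
  rw [signedSum, Fin.sum_univ_succ, apply_zero x]
  simp only [apply_succ_hist, Fin.cons_zero, Fin.cons_succ, Fin.tail_cons]
  rfl

theorem sum_exp_signedSum_le (l : ℝ) (x : BTree ℝ T) (hx : ∀ t κ, |x t κ| ≤ 1) :
    ∑ ε, exp (l * signedSum x ε) ≤ 2 ^ T * exp (l ^ 2 * T / 2) := by
  induction T with
  | zero => simp [signedSum]
  | succ T ih =>
    have hroot : (l * root x) ^ 2 ≤ l ^ 2 := by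
      rw [mul_pow]
      exact mul_le_of_le_one_right (sq_nonneg l) (sq_le_one_iff_abs_le_one _ |>.2 (hx 0 _))
    calc ∑ ε, exp (l * signedSum x ε)
        = ∑ b : Bool, exp (l * ((if b then 1 else -1) * root x)) *
            ∑ ε, exp (l * signedSum (child x b) ε) := by
          rw [← (Fin.consEquiv fun _ => Bool).sum_comp, Fintype.sum_prod_type]
          simp only [Fin.consEquiv, Equiv.coe_fn_mk, signedSum_cons, mul_add, exp_add, Finset.mul_sum]
      _ ≤ ∑ b : Bool, exp (l * ((if b then 1 else -1) * root x)) *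
            (2 ^ T * exp (l ^ 2 * T / 2)) := by
          gcongr with b
          exact ih (child x b) fun t κ => hx _ _
      _ = 2 * cosh (l * root x) * (2 ^ T * exp (l ^ 2 * T / 2)) := by simp [cosh_eq]; ring
      _ ≤ 2 * exp (l ^ 2 / 2) * (2 ^ T * exp (l ^ 2 * T / 2)) := by
          gcongr
          exact (cosh_le_exp_half_sq _).trans (exp_le_exp.2 (by linarith))
      _ = 2 ^ (T + 1) * exp (l ^ 2 * ↑(T + 1) / 2) := by
          rw [pow_succ, Nat.cast_succ, mul_add_one, add_div, exp_add]
          ring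

theorem sum_iSup_signedSum_le {ι : Type*} [Fintype ι] [Nonempty ι] (x : ι → BTree ℝ T)
    (hx : ∀ i t κ, |x i t κ| ≤ 1) {l : ℝ} (hl : 0 < l) :
    (∑ ε, ⨆ i, signedSum (x i) ε) / 2 ^ T ≤ log (Fintype.card ι) / l + l * T / 2 := by
  have hmax : ∀ ε, exp (l * ⨆ i, signedSum (x i) ε) ≤ ∑ i, exp (l * signedSum (x i) ε) := by
    intro ε
    obtain ⟨i, hi⟩ := exists_eq_ciSup_of_finite (f := fun i => signedSum (x i) ε)
    rw [← hi]
    exact Finset.single_le_sum (f := fun j => exp (l * signedSum (x j) ε))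
      (fun j _ => (exp_pos _).le) (Finset.mem_univ i)
  have hjensen : exp (l * ((∑ ε, ⨆ i, signedSum (x i) ε) / 2 ^ T)) ≤
      (∑ ε, exp (l * ⨆ i, signedSum (x i) ε)) / 2 ^ T := by
    have := convexOn_exp.map_sum_le (t := Finset.univ) (w := fun _ => (1 / 2 ^ T : ℝ))
      (p := fun ε : Fin T → Bool => l * ⨆ i, signedSum (x i) ε) (by intros; positivity)
      (by simp [Finset.card_univ]) (by simp)
    simp only [smul_eq_mul, ← Finset.mul_sum] at this
    refine (le_of_eq ?_).trans (this.trans_eq ?_) <;> ring_nf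
  have hmgf : (∑ ε, exp (l * ⨆ i, signedSum (x i) ε)) / 2 ^ T ≤
      Fintype.card ι * exp (l ^ 2 * T / 2) :=
    calc (∑ ε, exp (l * ⨆ i, signedSum (x i) ε)) / 2 ^ T
        ≤ (∑ i, ∑ ε, exp (l * signedSum (x i) ε)) / 2 ^ T := by
          rw [Finset.sum_comm]
          gcongr with ε
          exact hmax ε
      _ ≤ (∑ _i : ι, 2 ^ T * exp (l ^ 2 * T / 2)) / 2 ^ T := by
          gcongr with i
          exact sum_exp_signedSum_le l (x i) (hx i)
      _ = Fintype.card ι * exp (l ^ 2 * T / 2) := by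
          rw [Finset.sum_const, Finset.card_univ, nsmul_eq_mul]
          field_simp
  have hlog : l * ((∑ ε, ⨆ i, signedSum (x i) ε) / 2 ^ T) ≤
      log (Fintype.card ι) + l ^ 2 * T / 2 := by
    rw [← log_exp (l ^ 2 * T / 2), ← log_mul (by simp) (exp_pos _).ne',
      le_log_iff_exp_le (by positivity)]
    exact hjensen.trans hmgf
  rw [div_add' _ _ _ hl.ne', le_div_iff₀ hl]
  linarith

end SignedSum

section SeqRad

open Real

variable {Z : Type*} {F : Set (Z → Bool)} {N T : ℕ}

lemma seqRad_le_of_isZeroCover (hF : F.Nonempty)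
    (hcover : ∀ z : BTree Z T, ∃ V : Fin N → BTree Bool T, IsZeroCover F z V) {l : ℝ}
    (hl : 0 < l) : seqRad F T ≤ (log N / l + l * T / 2) / T := by
  refine Real.iSup_le (fun z => ?_) (by positivity)
  obtain ⟨V, hV⟩ := hcover z
  obtain ⟨f₀, hf₀⟩ := hF
  have : Nonempty F := ⟨⟨f₀, hf₀⟩⟩
  have : Nonempty (Fin N) := ⟨(hV f₀ hf₀ fun _ => true).choose⟩
  let x : Fin N → BTree ℝ T := fun i => map (fun b => if b then 1 else 0) (V i)
  have hx : ∀ i t κ, |x i t κ| ≤ 1 := fun i t κ => by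
    simp only [x, map]
    split_ifs <;> simp
  have hpointwise : ∀ ε : Fin T → Bool, (⨆ f : F, (1 / (T : ℝ)) * ∑ t : Fin T,
      (if ε t then (1 : ℝ) else -1) *
        (if (f : Z → Bool) (z t fun i => ε ⟨i.1, i.isLt.trans t.isLt⟩) then 1 else 0)) ≤
      (⨆ i, signedSum (x i) ε) / T := by
    intro ε
    refine ciSup_le fun f => ?_
    obtain ⟨i, hi⟩ := hV f f.2 ε
    have hsum : signedSum (x i) ε = ∑ t : Fin T, (if ε t then (1 : ℝ) else -1) *
        (if (f : Z → Bool) (z t fun i => ε ⟨i.1, i.isLt.trans t.isLt⟩) then 1 else 0) := by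
      simp only [x, signedSum, map, hi]
      rfl
    rw [← hsum, one_div_mul_eq_div]
    gcongr
    exact le_ciSup (f := fun i => signedSum (x i) ε) (Finite.bddAbove_range _) i
  calc _ ≤ (∑ ε : Fin T → Bool, (⨆ i, signedSum (x i) ε) / T) / 2 ^ T := by
        gcongr with ε
        exact hpointwise ε
    _ = ((∑ ε, ⨆ i, signedSum (x i) ε) / 2 ^ T) / T := by
        rw [← Finset.sum_div]
        ring
    _ ≤ (log N / l + l * T / 2) / T := by
        gcongr
        simpa using sum_iSup_signedSum_le x hx hl

lemma seqRad_le_sqrt_of_isZeroCover (hF : F.Nonempty) (hT : 0 < T)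
    (hcover : ∀ z : BTree Z T, ∃ V : Fin N → BTree Bool T, IsZeroCover F z V) {L : ℝ}
    (hL : 0 < L) (hN : log N ≤ L) : seqRad F T ≤ √2 * √L / √T := by
  have hT' : (0 : ℝ) < T := by exact_mod_cast hT
  set l := √2 * √L / √T with hl_def
  have hl : 0 < l := by positivity
  have hlsq : l ^ 2 * T = 2 * L := by
    rw [hl_def, div_pow, mul_pow, sq_sqrt zero_le_two, sq_sqrt hL.le, sq_sqrt hT'.le]
    field_simp
  clear_value l
  calc seqRad F T ≤ (log N / l + l * T / 2) / T := seqRad_le_of_isZeroCover hF hcover hl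
    _ ≤ (L / l + l * T / 2) / T := by gcongr
    _ = l := by
      field_simp
      linear_combination -hlsq

end SeqRad

theorem seqRad_bound {Z : Type*} (F : Set (Z → Bool)) (d T : ℕ)
    (hd : Ldim F = (d : ℕ∞)) (hd1 : 1 ≤ d) (hT : 1 ≤ T) :
    seqRad F T ≤ 12 * Real.sqrt (d * Real.log (Real.exp 1 * T)) / Real.sqrt T ∧
    (T : ℝ) * seqRad F T ≤ 12 * Real.sqrt (d * T * (Real.log T + 1)) := by
  have hF : F.Nonempty := nonempty_of_Ldim_ne_zero (by rw [hd]; exact_mod_cast (by omega : d ≠ 0))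
  have hcover : ∀ z : BTree Z T, ∃ V, IsZeroCover F z V :=
    exists_isZeroCover (not_lShattered_of_Ldim_lt (by rw [hd]; exact_mod_cast d.lt_succ_self))
  have hT' : (0 : ℝ) < T := by exact_mod_cast hT
  have hlog : Real.log (Real.exp 1 * T) = Real.log T + 1 := by
    rw [Real.log_mul (Real.exp_pos 1).ne' hT'.ne', Real.log_exp, add_comm]
  have hL : 0 < d * Real.log (Real.exp 1 * T) := by
    rw [hlog]
    have := Real.log_nonneg (by exact_mod_cast hT : (1 : ℝ) ≤ T)
    positivity
  have hRad := seqRad_le_sqrt_of_isZeroCover hF hT hcover hL (log_coverBound_le d hT)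
  have h12 : seqRad F T ≤ 12 * Real.sqrt (d * Real.log (Real.exp 1 * T)) / Real.sqrt T :=
    hRad.trans (by gcongr; exact Real.sqrt_le_iff.2 ⟨by norm_num, by norm_num⟩)
  refine ⟨h12, ?_⟩
  calc (T : ℝ) * seqRad F T
      ≤ T * (12 * Real.sqrt (d * Real.log (Real.exp 1 * T)) / Real.sqrt T) := by gcongr
    _ = 12 * Real.sqrt (d * Real.log (Real.exp 1 * T)) * (T / Real.sqrt T) := by ring
    _ = 12 * Real.sqrt (d * T * (Real.log T + 1)) := by
      rw [Real.div_sqrt, hlog, mul_assoc, ← Real.sqrt_mul (by positivity)]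
      ring_nf
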